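/- arXiv:1610.00144 — 2 statements merged into one kernel-verified Lean document; each statement's English description precedes it below -/
import Mathlib

section
/- Let Q be a finite quiver without sources, B = L_k(Q^op) its Leavitt path algebra of the opposite quiver, and P• the projective Leavitt complex of Q. The right actions of the generators e_j, α^op, (α^op)* of B on P•, given by formulas (on basis elements x ζ_{(p,q)}): x ζ_{(p,q)} · e_j = δ_{j,t(q)} x ζ_{(p,q)}; x ζ_{(p,q)} · α^op = x ζ_{(p̃, e_{t(α)})} − Σ_{β ∈ T(α)} x ζ_{(p̃β, β)} if l(q) = 0, p = p̃α and α is associated, and δ_{s(α),t(q)} x ζ_{(p, αq)} otherwise; x ζ_{(p,q)} · (α^op)* = δ_{α,α₁} x ζ_{(p, q̂)} if q = α₁ q̂, and δ_{s(p),t(α)} x ζ_{(pα, e_{s(α)})} if l(q) = 0 — satisfy the defining relations of L_k(Q^op), so P• is a right B-module. -/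
noncomputable section

/-- A finite quiver: finite sets of vertices and arrows, with source and target maps. -/
structure FQ where
  V : Type
  E : Type
  [fV : Fintype V]
  [fE : Fintype E]
  [dV : DecidableEq V]
  [dE : DecidableEq E]
  s : E → V
  t : E → V

attribute [instance] FQ.fV FQ.fE FQ.dV FQ.dE

/-- `Q` has no sources: every vertex admits an arrow terminating at it. -/
def FQ.NoSources (Q : FQ) : Prop := ∀ i : Q.V, ∃ e : Q.E, Q.t e = i

/-- The opposite quiver. -/
def FQ.op (Q : FQ) : FQ := { V := Q.V, E := Q.E, s := Q.t, t := Q.s }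

/-- Paths in the quiver `Q` from a vertex to a vertex; `cons p e he` is the path
`e ∘ p` obtained by composing an arrow `e` after the path `p` (paths are written
from right to left). -/
inductive QP (Q : FQ) : Q.V → Q.V → Type
  | nil (i : Q.V) : QP Q i i
  | cons {i j : Q.V} (p : QP Q i j) (e : Q.E) (he : Q.s e = j) : QP Q i (Q.t e)

namespace QP

variable {Q : FQ}

/-- The length of a path. -/
def length : ∀ {i j : Q.V}, QP Q i j → ℕ
  | _, _, .nil _ => 0
  | _, _, .cons p _ _ => length p + 1

/-- The first (rightmost) arrow of a path, if any. -/
def firstArrow : ∀ {i j : Q.V}, QP Q i j → Option Q.E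
  | _, _, .nil _ => none
  | _, _, .cons p e _ => some ((firstArrow p).getD e)

/-- The last (leftmost) arrow of a path, if any. -/
def lastArrow : ∀ {i j : Q.V}, QP Q i j → Option Q.E
  | _, _, .nil _ => none
  | _, _, .cons _ e _ => some e

/-- Transport of a path along an equality of its starting vertices. -/
def castSrc {i i' j : Q.V} (h : i = i') (p : QP Q i j) : QP Q i' j := h ▸ p

/-- Extend a path at its starting vertex by an arrow (`p ↦ p ∘ e`). -/
def preCons (e : Q.E) : ∀ {j : Q.V}, QP Q (Q.t e) j → QP Q (Q.s e) j
  | _, .nil _ => .cons (.nil (Q.s e)) e rfl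
  | _, .cons p f hf => .cons (preCons e p) f hf

lemma length_castSrc {i i' j : Q.V} (h : i = i') (p : QP Q i j) :
    (castSrc h p).length = p.length := by subst h; rfl

lemma length_preCons (e : Q.E) : ∀ {j : Q.V} (p : QP Q (Q.t e) j),
    (preCons e p).length = p.length + 1
  | _, .nil _ => by simp [preCons, length]
  | _, .cons p f hf => by
      show (QP.cons (preCons e p) f hf).length = _
      simp [length, length_preCons e p]

end QP

/-- With respect to a choice `asc` of an *associated* arrow terminating at each
non-source vertex, `IsAssoc Q asc a` says that the arrow `a` is the associated arrow
terminating at its target. -/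
def IsAssoc (Q : FQ) (asc : ∀ i : Q.V, (∃ e, Q.t e = i) → Q.E) (a : Q.E) : Prop :=
  asc (Q.t a) ⟨a, rfl⟩ = a

/-- `(p, q)` is an *associated pair*: the paths `p` and `q` start at the same vertex,
and either one of them is trivial, or their first arrows differ, or their common first
arrow is not associated. -/
def AssocPair (Q : FQ) (asc : ∀ i : Q.V, (∃ e, Q.t e = i) → Q.E)
    {i j j' : Q.V} (p : QP Q i j) (q : QP Q i j') : Prop :=
  ∀ a : Q.E, p.firstArrow = some a → q.firstArrow = some a → ¬ IsAssoc Q asc a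

lemma assocPair_nil_left {Q : FQ} {asc : ∀ i : Q.V, (∃ e, Q.t e = i) → Q.E}
    {i j : Q.V} (q : QP Q i j) : AssocPair Q asc (QP.nil i) q := by
  intro a h
  simp [QP.firstArrow] at h

lemma assocPair_nil_right {Q : FQ} {asc : ∀ i : Q.V, (∃ e, Q.t e = i) → Q.E}
    {i j : Q.V} (p : QP Q i j) : AssocPair Q asc p (QP.nil i) := by
  intro a _ h
  simp [QP.firstArrow] at h

/-- The index set `Λ^l_i` (for `i = x.i`): associated pairs `(p, q)` with
`t(p) = i` and `l(q) - l(p) = l`. -/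
structure Lam (Q : FQ) (asc : ∀ i : Q.V, (∃ e, Q.t e = i) → Q.E) (l : ℤ) where
  a : Q.V              -- the common starting vertex of `p` and `q`
  i : Q.V              -- the terminating vertex of `p`
  b : Q.V              -- the terminating vertex of `q`
  p : QP Q a i
  q : QP Q a b
  ok : AssocPair Q asc p q
  deg : (q.length : ℤ) - (p.length : ℤ) = l

instance {Q : FQ} {asc : ∀ i : Q.V, (∃ e, Q.t e = i) → Q.E} {l : ℤ} :
    DecidableEq (Lam Q asc l) := Classical.decEq _
/-- Generators of the path algebra `kQ`. -/
inductive AGen (Q : FQ)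
  | vtx (i : Q.V)
  | ar (e : Q.E)

/-- The defining relations of the radical square zero algebra `A = kQ/J²`:
the trivial paths are orthogonal idempotents summing to the unit, arrows are unital
with respect to the trivial paths at their endpoints, and any product of two arrows
vanishes. -/
inductive ARel (k : Type) [Field k] (Q : FQ) :
    FreeAlgebra k (AGen Q) → FreeAlgebra k (AGen Q) → Prop
  | vtx_mul (i j : Q.V) :
      ARel k Q (FreeAlgebra.ι k (AGen.vtx i) * FreeAlgebra.ι k (AGen.vtx j))
        (if i = j then FreeAlgebra.ι k (AGen.vtx i) else 0)
  | sum_vtx : ARel k Q (∑ i : Q.V, FreeAlgebra.ι k (AGen.vtx i)) 1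
  | vtx_ar (e : Q.E) :
      ARel k Q (FreeAlgebra.ι k (AGen.vtx (Q.t e)) * FreeAlgebra.ι k (AGen.ar e))
        (FreeAlgebra.ι k (AGen.ar e))
  | ar_vtx (e : Q.E) :
      ARel k Q (FreeAlgebra.ι k (AGen.ar e) * FreeAlgebra.ι k (AGen.vtx (Q.s e)))
        (FreeAlgebra.ι k (AGen.ar e))
  | rad_sq (e f : Q.E) :
      ARel k Q (FreeAlgebra.ι k (AGen.ar e) * FreeAlgebra.ι k (AGen.ar f)) 0

/-- The radical square zero algebra `A = kQ/J²` of the finite quiver `Q`. -/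
abbrev AlgA (k : Type) [Field k] (Q : FQ) := RingQuot (ARel k Q)

/-- The image `e_i` in `A` of the trivial path at the vertex `i`. -/
def vtxA (k : Type) [Field k] (Q : FQ) (i : Q.V) : AlgA k Q :=
  RingQuot.mkAlgHom k (ARel k Q) (FreeAlgebra.ι k (AGen.vtx i))

/-- The image `α` in `A` of an arrow `α`. -/
def arA (k : Type) [Field k] (Q : FQ) (e : Q.E) : AlgA k Q :=
  RingQuot.mkAlgHom k (ARel k Q) (FreeAlgebra.ι k (AGen.ar e))

lemma arA_mul_vtxA (k : Type) [Field k] (Q : FQ) (e : Q.E) :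
    arA k Q e * vtxA k Q (Q.s e) = arA k Q e := by
  have h := RingQuot.mkAlgHom_rel k (ARel.ar_vtx (k := k) (Q := Q) e)
  simpa [vtxA, arA, map_mul] using h

/-- The indecomposable projective left `A`-module `P_i = A e_i`. -/
def Pmod (k : Type) [Field k] (Q : FQ) (i : Q.V) : Submodule (AlgA k Q) (AlgA k Q) :=
  Submodule.span (AlgA k Q) {vtxA k Q i}

lemma vtxA_mem (k : Type) [Field k] (Q : FQ) (i : Q.V) : vtxA k Q i ∈ Pmod k Q i :=
  Submodule.mem_span_singleton_self _

lemma arA_mem (k : Type) [Field k] (Q : FQ) (e : Q.E) {i : Q.V} (he : Q.s e = i) :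
    arA k Q e ∈ Pmod k Q i := by
  subst he
  rw [← arA_mul_vtxA k Q e]
  simpa [smul_eq_mul] using
    Submodule.smul_mem (Pmod k Q (Q.s e)) (arA k Q e) (vtxA_mem k Q (Q.s e))

/-- The `l`-th component `P^l = ⊕_{i ∈ Q₀} P_i^{(Λ^l_i)}` of the projective Leavitt
complex. -/
abbrev PL (k : Type) [Field k] (Q : FQ) (asc : ∀ i : Q.V, (∃ e, Q.t e = i) → Q.E)
    (l : ℤ) : Type :=
  Π₀ x : Lam Q asc l, ↥(Pmod k Q x.i)

instance PL.instAddCommGroup (k : Type) [Field k] (Q : FQ)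
    (asc : ∀ i : Q.V, (∃ e, Q.t e = i) → Q.E) (l : ℤ) :
    AddCommGroup (PL k Q asc l) :=
  @DFinsupp.addCommGroup (Lam Q asc l) (fun x => ↥(Pmod k Q x.i)) (fun _ => inferInstance)
/-- The total module `⊕_{l ∈ ℤ} P^l` underlying the projective Leavitt complex. -/
abbrev PT (k : Type) [Field k] (Q : FQ)
    (asc : ∀ i : Q.V, (∃ e, Q.t e = i) → Q.E) : Type :=
  Π₀ l : ℤ, PL k Q asc l

instance PT.instAddCommGroup (k : Type) [Field k] (Q : FQ)
    (asc : ∀ i : Q.V, (∃ e, Q.t e = i) → Q.E) : AddCommGroup (PT k Q asc) :=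
  @DFinsupp.addCommGroup ℤ (fun l => PL k Q asc l) (fun _ => inferInstance)

/-- The element `x ζ_{(p,q)}` of `⊕_{l} P^l` in degree `l`, for `(p,q) ∈ Λ^l_i` and
`x = u ∈ P_i`. -/
def emb {k : Type} [Field k] {Q : FQ} {asc : ∀ i : Q.V, (∃ e, Q.t e = i) → Q.E}
    (l : ℤ) (x : Lam Q asc l) (u : ↥(Pmod k Q x.i)) : PT k Q asc :=
  DFinsupp.single l (DFinsupp.single x u)

/-- The defining formulas (4.2)–(4.4) for the right action of the generators of the
Leavitt path algebra `B = L_k(Q^op)` on the projective Leavitt complex: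
`Tv j` is the action of `e_j`, `Ta α` the action of `α^op`, and `Ts α` the action of
`(α^op)*`.  Explicitly, on `x ζ_{(p,q)}`:
* `x ζ_{(p,q)} · e_j = δ_{j,t(q)} x ζ_{(p,q)}`;
* `x ζ_{(p,q)} · α^op = x ζ_{(p̃, e_{t(α)})} - ∑_{β ∈ T(α)} x ζ_{(p̃β, β)}` if
  `l(q) = 0`, `p = p̃α` and `α` is associated, and `δ_{s(α),t(q)} x ζ_{(p, αq)}`
  otherwise;
* `x ζ_{(p,q)} · (α^op)* = δ_{α,α₁} x ζ_{(p, q̂)}` if `q = α₁ q̂`, and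
  `δ_{s(p),t(α)} x ζ_{(pα, e_{s(α)})}` if `l(q) = 0`. -/
structure ActionFormulas (k : Type) [Field k] (Q : FQ)
    (asc : ∀ i : Q.V, (∃ e, Q.t e = i) → Q.E)
    (Tv : Q.V → PT k Q asc → PT k Q asc)
    (Ta Ts : Q.E → PT k Q asc → PT k Q asc) : Prop where
  fv : ∀ (j : Q.V) (l : ℤ) (x : Lam Q asc l) (u : ↥(Pmod k Q x.i)),
    Tv j (emb l x u) = if x.b = j then emb l x u else 0
  fa_assoc : ∀ (α : Q.E) (_hα : IsAssoc Q asc α) (j : Q.V) (pt : QP Q (Q.t α) j)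
    (ok : AssocPair Q asc (QP.preCons α pt) (QP.nil (Q.s α))) (l : ℤ)
    (dg : (((QP.nil (Q.s α)).length : ℤ)) - (((QP.preCons α pt).length : ℤ)) = l)
    (ok1 : AssocPair Q asc pt (QP.nil (Q.t α)))
    (dg1 : (((QP.nil (Q.t α)).length : ℤ)) - ((pt.length : ℤ)) = l + 1)
    (okb : ∀ b : {b : Q.E // Q.t b = Q.t α ∧ b ≠ α},
      AssocPair Q asc (QP.preCons b.1 (QP.castSrc b.2.1.symm pt))
        (QP.cons (QP.nil (Q.s b.1)) b.1 rfl))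
    (dgb : ∀ b : {b : Q.E // Q.t b = Q.t α ∧ b ≠ α},
      (((QP.cons (QP.nil (Q.s b.1)) b.1 rfl).length : ℤ)) -
        (((QP.preCons b.1 (QP.castSrc b.2.1.symm pt)).length : ℤ)) = l + 1)
    (u : ↥(Pmod k Q j)),
    Ta α (emb l ⟨Q.s α, j, Q.s α, QP.preCons α pt, QP.nil (Q.s α), ok, dg⟩ u) =
      emb (l + 1) ⟨Q.t α, j, Q.t α, pt, QP.nil (Q.t α), ok1, dg1⟩ u -
      ∑ b : {b : Q.E // Q.t b = Q.t α ∧ b ≠ α},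
        emb (l + 1) ⟨Q.s b.1, j, Q.t b.1, QP.preCons b.1 (QP.castSrc b.2.1.symm pt),
          QP.cons (QP.nil (Q.s b.1)) b.1 rfl, okb b, dgb b⟩ u
  fa_ext : ∀ (α : Q.E) (l : ℤ) (x : Lam Q asc l) (u : ↥(Pmod k Q x.i))
    (_hcond : ¬(x.q.length = 0 ∧ x.p.firstArrow = some α ∧ IsAssoc Q asc α))
    (h : Q.s α = x.b) (ok' : AssocPair Q asc x.p (QP.cons x.q α h))
    (dg' : (((QP.cons x.q α h).length : ℤ)) - ((x.p.length : ℤ)) = l + 1),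
    Ta α (emb l x u) = emb (l + 1) ⟨x.a, x.i, Q.t α, x.p, QP.cons x.q α h, ok', dg'⟩ u
  fa_zero : ∀ (α : Q.E) (l : ℤ) (x : Lam Q asc l) (u : ↥(Pmod k Q x.i))
    (_hcond : ¬(x.q.length = 0 ∧ x.p.firstArrow = some α ∧ IsAssoc Q asc α))
    (_h : Q.s α ≠ x.b), Ta α (emb l x u) = 0
  fs_top_eq : ∀ (α₁ : Q.E) (l : ℤ) (a i c : Q.V) (p : QP Q a i) (qh : QP Q a c)
    (he : Q.s α₁ = c)
    (ok : AssocPair Q asc p (QP.cons qh α₁ he))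
    (dg : (((QP.cons qh α₁ he).length : ℤ)) - ((p.length : ℤ)) = l)
    (ok' : AssocPair Q asc p qh)
    (dg' : ((qh.length : ℤ)) - ((p.length : ℤ)) = l - 1)
    (u : ↥(Pmod k Q i)),
    Ts α₁ (emb l ⟨a, i, Q.t α₁, p, QP.cons qh α₁ he, ok, dg⟩ u) =
      emb (l - 1) ⟨a, i, c, p, qh, ok', dg'⟩ u
  fs_top_ne : ∀ (α α₁ : Q.E), α ≠ α₁ → ∀ (l : ℤ) (a i c : Q.V) (p : QP Q a i)
    (qh : QP Q a c) (he : Q.s α₁ = c)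
    (ok : AssocPair Q asc p (QP.cons qh α₁ he))
    (dg : (((QP.cons qh α₁ he).length : ℤ)) - ((p.length : ℤ)) = l)
    (u : ↥(Pmod k Q i)),
    Ts α (emb l ⟨a, i, Q.t α₁, p, QP.cons qh α₁ he, ok, dg⟩ u) = 0
  fs_nil_eq : ∀ (α : Q.E) (l : ℤ) (i : Q.V) (p : QP Q (Q.t α) i)
    (ok : AssocPair Q asc p (QP.nil (Q.t α)))
    (dg : (((QP.nil (Q.t α)).length : ℤ)) - ((p.length : ℤ)) = l)
    (ok' : AssocPair Q asc (QP.preCons α p) (QP.nil (Q.s α)))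
    (dg' : (((QP.nil (Q.s α)).length : ℤ)) - (((QP.preCons α p).length : ℤ)) = l - 1)
    (u : ↥(Pmod k Q i)),
    Ts α (emb l ⟨Q.t α, i, Q.t α, p, QP.nil (Q.t α), ok, dg⟩ u) =
      emb (l - 1) ⟨Q.s α, i, Q.s α, QP.preCons α p, QP.nil (Q.s α), ok', dg'⟩ u
  fs_nil_ne : ∀ (α : Q.E) (l : ℤ) (x : Lam Q asc l) (u : ↥(Pmod k Q x.i)),
    x.q.length = 0 → Q.t α ≠ x.a → Ts α (emb l x u) = 0

/-- The element of `Λ⁰_i` given by the pair `(e_i, e_i)` of trivial paths. -/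
def nilLam {Q : FQ} {asc : ∀ i : Q.V, (∃ e, Q.t e = i) → Q.E} (v : Q.V) :
    Lam Q asc 0 :=
  ⟨v, v, v, QP.nil v, QP.nil v, assocPair_nil_left _, by simp [QP.length]⟩
section Helpers

variable {k : Type} [Field k] {Q : FQ} {asc : ∀ i : Q.V, (∃ e, Q.t e = i) → Q.E}

namespace QP

lemma firstArrow_src : ∀ {i j : Q.V} (p : QP Q i j) (e : Q.E),
    p.firstArrow = some e → Q.s e = i
  | _, _, .nil _, e => by simp [firstArrow]
  | _, _, .cons p f hf, e => by
      intro h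
      simp only [firstArrow, Option.some_inj] at h
      cases hp : p.firstArrow with
      | none =>
        rw [hp] at h
        simp at h
        subst h
        cases p with
        | nil => exact hf
        | cons p g hg => simp [firstArrow] at hp
      | some g =>
        rw [hp] at h
        simp at h
        subst h
        exact firstArrow_src p _ hp

lemma firstArrow_preCons (e : Q.E) : ∀ {j : Q.V} (p : QP Q (Q.t e) j),
    (preCons e p).firstArrow = some e
  | _, .nil _ => by simp [preCons, firstArrow]
  | _, .cons p f hf => by
      show (QP.cons (preCons e p) f hf).firstArrow = some e
      simp [firstArrow, firstArrow_preCons e p]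

lemma eq_of_length_zero : ∀ {i j : Q.V} (q : QP Q i j), q.length = 0 → i = j
  | _, _, .nil _, _ => rfl
  | _, _, .cons p e he, h => by simp [length] at h

lemma castSrc_castSrc {i i' i'' j : Q.V} (h : i = i') (h' : i' = i'') (p : QP Q i j) :
    castSrc h' (castSrc h p) = castSrc (h.trans h') p := by subst h; subst h'; rfl

@[simp] lemma castSrc_rfl {i j : Q.V} (p : QP Q i j) : castSrc rfl p = p := rfl

lemma firstArrow_castSrc {i i' j : Q.V} (h : i = i') (p : QP Q i j) :
    (castSrc h p).firstArrow = p.firstArrow := by subst h; rfl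

lemma exists_decomp {i j : Q.V} (p : QP Q i j) (α : Q.E)
    (hp : p.firstArrow = some α) :
    ∃ (h : i = Q.s α) (pt : QP Q (Q.t α) j), p = castSrc h.symm (preCons α pt) := by
  induction p with
  | nil => simp [firstArrow] at hp
  | cons p f hf ih =>
    cases p with
    | nil =>
      simp only [firstArrow, Option.getD_none, Option.some_inj] at hp
      subst hp
      exact ⟨hf.symm, QP.nil (Q.t f), by subst hf; rfl⟩
    | cons p' g hg =>
      have h1 : (QP.cons p' g hg).firstArrow = some α := by
        simp only [firstArrow, Option.getD_some, Option.some_inj] at hp ⊢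
        exact hp
      obtain ⟨h, pt, hpt⟩ := ih h1
      subst h
      simp only [castSrc_rfl] at hpt
      refine ⟨rfl, QP.cons pt f hf, ?_⟩
      show QP.cons (QP.cons p' g hg) f hf = QP.cons (QP.preCons α pt) f hf
      rw [hpt]

end QP

/-- Equality of `emb` terms across a propositional equality of the degree. -/
lemma emb_eq_of {l l' : ℤ} (h : l = l') {a i b : Q.V} (p : QP Q a i) (q : QP Q a b)
    (ok : AssocPair Q asc p q) (dg : (q.length : ℤ) - (p.length : ℤ) = l)
    (dg' : (q.length : ℤ) - (p.length : ℤ) = l') (u : ↥(Pmod k Q i)) :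
    emb l ⟨a, i, b, p, q, ok, dg⟩ u = emb l' ⟨a, i, b, p, q, ok, dg'⟩ u := by
  subst h; rfl

/-- Recasting the starting vertex of an `emb` term whose `q`-path is trivial. -/
lemma emb_nil_cast {l : ℤ} {a a' i : Q.V} (h : a' = a) (p : QP Q a i)
    (ok : AssocPair Q asc p (QP.nil a))
    (dg : ((QP.nil a).length : ℤ) - (p.length : ℤ) = l)
    (ok' : AssocPair Q asc (QP.castSrc h.symm p) (QP.nil a'))
    (dg' : ((QP.nil a').length : ℤ) - ((QP.castSrc h.symm p).length : ℤ) = l)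
    (u : ↥(Pmod k Q i)) :
    emb l ⟨a, i, a, p, QP.nil a, ok, dg⟩ u
      = emb l ⟨a', i, a', QP.castSrc h.symm p, QP.nil a', ok', dg'⟩ u := by
  subst h; rfl

/-- Composing two source-casts in a correction term. -/
lemma emb_corr_comp {l l' : ℤ} (hl : l = l') {a a' i : Q.V} (h1 : a = a') (g : Q.E)
    (h2 : a' = Q.t g) (h3 : a = Q.t g) (pt : QP Q a i)
    (ok : AssocPair Q asc (QP.preCons g (QP.castSrc h2 (QP.castSrc h1 pt)))
      (QP.cons (QP.nil (Q.s g)) g rfl))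
    (dg : (((QP.cons (QP.nil (Q.s g)) g rfl).length : ℤ))
      - (((QP.preCons g (QP.castSrc h2 (QP.castSrc h1 pt))).length : ℤ)) = l)
    (ok' : AssocPair Q asc (QP.preCons g (QP.castSrc h3 pt))
      (QP.cons (QP.nil (Q.s g)) g rfl))
    (dg' : (((QP.cons (QP.nil (Q.s g)) g rfl).length : ℤ))
      - (((QP.preCons g (QP.castSrc h3 pt)).length : ℤ)) = l')
    (u : ↥(Pmod k Q i)) :
    emb l ⟨Q.s g, i, Q.t g, QP.preCons g (QP.castSrc h2 (QP.castSrc h1 pt)),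
      QP.cons (QP.nil (Q.s g)) g rfl, ok, dg⟩ u
      = emb l' ⟨Q.s g, i, Q.t g, QP.preCons g (QP.castSrc h3 pt),
        QP.cons (QP.nil (Q.s g)) g rfl, ok', dg'⟩ u := by
  subst hl
  subst h1
  subst h2
  rfl

lemma mk_assocPair {a i j : Q.V} {p : QP Q a i} {q : QP Q a j} {b : Q.E}
    (hp : p.firstArrow = some b) (hq : q.firstArrow = some b)
    (h : ¬ IsAssoc Q asc b) : AssocPair Q asc p q := by
  intro c hc hc'
  rw [hp] at hc
  cases hc
  exact h

lemma asc_cast (b : Q.E) (v : Q.V) (h : Q.t b = v) :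
    asc (Q.t b) ⟨b, rfl⟩ = asc v ⟨b, h⟩ := by subst h; rfl

lemma isAssoc_asc (i : Q.V) (h : ∃ e, Q.t e = i) (hh : Q.t (asc i h) = i) :
    IsAssoc Q asc (asc i h) := by
  unfold IsAssoc
  generalize hg : asc i h = α at *
  subst hh
  exact hg

lemma eq_asc_of_isAssoc {α : Q.E} (hα : IsAssoc Q asc α) (v : Q.V) (h : Q.t α = v) :
    asc v ⟨α, h⟩ = α := by
  have hc := asc_cast (asc := asc) α v h
  rw [← hc]; exact hα

lemma not_isAssoc_of_ne {α b : Q.E} (hα : IsAssoc Q asc α) (h : Q.t b = Q.t α)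
    (hne : b ≠ α) : ¬ IsAssoc Q asc b := by
  intro hb
  apply hne
  have h1 : asc (Q.t α) ⟨b, h⟩ = b := by
    have hc := asc_cast (asc := asc) b (Q.t α) h
    rw [← hc]; exact hb
  have h2 : asc (Q.t α) ⟨b, h⟩ = asc (Q.t α) ⟨α, rfl⟩ := rfl
  rw [h2, hα] at h1
  exact h1.symm

lemma assocPair_of_cons {a i b : Q.V} {p : QP Q a i} {q : QP Q a b} {e : Q.E}
    {h : Q.s e = b} (ok : AssocPair Q asc p (QP.cons q e h)) : AssocPair Q asc p q := by
  intro c hp hq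
  refine ok c hp ?_
  simp [QP.firstArrow, hq]

lemma assocPair_cons {a i b : Q.V} (p : QP Q a i) (q : QP Q a b) (e : Q.E)
    (h : Q.s e = b) (ok : AssocPair Q asc p q)
    (hne : ¬(q.length = 0 ∧ p.firstArrow = some e ∧ IsAssoc Q asc e)) :
    AssocPair Q asc p (QP.cons q e h) := by
  intro c hp hq
  cases q with
  | nil =>
    simp only [QP.firstArrow, Option.getD_none, Option.some_inj] at hq
    subst hq
    exact fun hA => hne ⟨by simp [QP.length], hp, hA⟩
  | cons q' f hf =>
    refine ok c hp ?_
    simp only [QP.firstArrow, Option.getD_some, Option.some_inj] at hq ⊢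
    exact hq

/-- The structural decomposition of an element of `Λ` on which the associated-arrow
formula (4.2) applies. -/
lemma lam_decomp {l : ℤ} {a i b : Q.V} (p : QP Q a i) (q : QP Q a b)
    (ok : AssocPair Q asc p q) (dg : (q.length : ℤ) - (p.length : ℤ) = l)
    (α : Q.E) (h0 : q.length = 0) (hα : p.firstArrow = some α) :
    ∃ (pt : QP Q (Q.t α) i)
      (ok' : AssocPair Q asc (QP.preCons α pt) (QP.nil (Q.s α)))
      (dg' : (((QP.nil (Q.s α)).length : ℤ)) - (((QP.preCons α pt).length : ℤ)) = l),
      ∀ (u : ↥(Pmod k Q i)),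
      emb l (⟨a, i, b, p, q, ok, dg⟩ : Lam Q asc l) u
        = emb l ⟨Q.s α, i, Q.s α, QP.preCons α pt, QP.nil (Q.s α), ok', dg'⟩ u := by
  cases q with
  | cons q e he => simp [QP.length] at h0
  | nil =>
    obtain ⟨h, pt, hpt⟩ := QP.exists_decomp p α hα
    subst h
    simp only [QP.castSrc_rfl] at hpt
    subst hpt
    exact ⟨pt, ok, dg, fun u => rfl⟩

instance (g : Q.E) : Decidable (IsAssoc Q asc g) := by unfold IsAssoc; infer_instance

/-- The correction term appearing in the Cuntz–Krieger relation: for an arrow `g`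
terminating at `a` which is not associated, the element `x ζ_{(pg, g)}`, and `0`
otherwise. -/
def corrTerm (l : ℤ) (a i2 : Q.V) (p : QP Q a i2)
    (dg0 : (((QP.nil a).length : ℤ)) - ((p.length : ℤ)) = l)
    (u : ↥(Pmod k Q i2)) (g : Q.E) : PT k Q asc :=
  if hg : Q.t g = a ∧ ¬ IsAssoc Q asc g then
    emb l ⟨Q.s g, i2, Q.t g, QP.preCons g (QP.castSrc hg.1.symm p),
      QP.cons (QP.nil (Q.s g)) g rfl,
      mk_assocPair (QP.firstArrow_preCons g _) (by simp [QP.firstArrow]) hg.2,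
      by
        rw [QP.length_preCons, QP.length_castSrc]
        simp only [QP.length] at dg0 ⊢
        push_cast at dg0 ⊢
        omega⟩ u
  else 0

lemma corrTerm_pos {l : ℤ} {a i2 : Q.V} {p : QP Q a i2}
    {dg0 : (((QP.nil a).length : ℤ)) - ((p.length : ℤ)) = l}
    {u : ↥(Pmod k Q i2)} {g : Q.E} (hg : Q.t g = a ∧ ¬ IsAssoc Q asc g)
    (ok : AssocPair Q asc (QP.preCons g (QP.castSrc hg.1.symm p))
      (QP.cons (QP.nil (Q.s g)) g rfl))
    (dg : (((QP.cons (QP.nil (Q.s g)) g rfl).length : ℤ))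
      - (((QP.preCons g (QP.castSrc hg.1.symm p)).length : ℤ)) = l) :
    corrTerm (asc := asc) l a i2 p dg0 u g
      = emb l ⟨Q.s g, i2, Q.t g, QP.preCons g (QP.castSrc hg.1.symm p),
        QP.cons (QP.nil (Q.s g)) g rfl, ok, dg⟩ u := by
  unfold corrTerm
  rw [dif_pos hg]

lemma corrTerm_zero {l : ℤ} {a i2 : Q.V} {p : QP Q a i2}
    {dg0 : (((QP.nil a).length : ℤ)) - ((p.length : ℤ)) = l}
    {u : ↥(Pmod k Q i2)} {g : Q.E} (hg : ¬ (Q.t g = a ∧ ¬ IsAssoc Q asc g)) :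
    corrTerm (asc := asc) l a i2 p dg0 u g = 0 := by
  unfold corrTerm
  rw [dif_neg hg]

/-- Induction principle: checking statements on the generators `x ζ_{(p,q)}`. -/
lemma PT.induction_on (M : PT k Q asc → Prop) (h0 : M 0)
    (hadd : ∀ a b, M a → M b → M (a + b))
    (hemb : ∀ (l : ℤ) (x : Lam Q asc l) (u : ↥(Pmod k Q x.i)), M (emb l x u)) :
    ∀ u, M u := by
  intro u
  induction u using DFinsupp.induction with
  | h0 => exact h0
  | ha l v rest _ hv ih =>
    refine hadd _ _ ?_ ih
    clear hv
    induction v using DFinsupp.induction with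
    | h0 => simpa using h0
    | ha x w rest' _ _ ih2 =>
      rw [DFinsupp.single_add]
      exact hadd _ _ (hemb l x w) ih2

end Helpers

set_option maxHeartbeats 2000000 in
/-- **The action formulas define a right module over the Leavitt path algebra
(Lemma 4.4).**  Let `Q` be a finite quiver without sources and `B = L_k(Q^op)` the
Leavitt path algebra of the opposite quiver.  Suppose `Tv`, `Ta`, `Ts` are `k`-linear
operators on `⊕_l P^l` satisfying the defining formulas for the right actions of the
generators `e_j`, `α^op`, `(α^op)*` of `B` on the projective Leavitt complex.  Then
these actions satisfy the defining relations of `L_k(Q^op)` (written for a *right*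
action, so that the operator of a product `ab` is the composite of the operator of `b`
after that of `a`); hence they make `P•` a right `B`-module. -/
theorem action_formulas_satisfy_leavitt_relations (k : Type) [Field k]
    (Q : FQ) (hQ : Q.NoSources)
    (asc : ∀ i : Q.V, (∃ e, Q.t e = i) → Q.E)
    (hasc : ∀ (i : Q.V) (h : ∃ e, Q.t e = i), Q.t (asc i h) = i)
    (Tv : Q.V → PT k Q asc →ₗ[k] PT k Q asc)
    (Ta Ts : Q.E → PT k Q asc →ₗ[k] PT k Q asc)
    (hF : ActionFormulas k Q asc (fun j u => Tv j u) (fun e u => Ta e u)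
      (fun e u => Ts e u)) :
    (∀ (i j : Q.V) (u : PT k Q asc), Tv j (Tv i u) = if i = j then Tv i u else 0) ∧
    (∀ (e : Q.E) (u : PT k Q asc), Ta e (Tv (Q.s e) u) = Ta e u) ∧
    (∀ (e : Q.E) (u : PT k Q asc), Tv (Q.t e) (Ta e u) = Ta e u) ∧
    (∀ (e : Q.E) (u : PT k Q asc), Ts e (Tv (Q.t e) u) = Ts e u) ∧
    (∀ (e : Q.E) (u : PT k Q asc), Tv (Q.s e) (Ts e u) = Ts e u) ∧
    (∀ (e f : Q.E) (u : PT k Q asc),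
      Ts f (Ta e u) = if e = f then Tv (Q.s e) u else 0) ∧
    (∀ (i : Q.V), (∃ e, Q.t e = i) → ∀ u : PT k Q asc,
      ∑ e : {e : Q.E // Q.t e = i}, Ta e.1 (Ts e.1 u) = Tv i u) := by
  -- Restate the formulas in beta-reduced form.
  have Fv : ∀ (j : Q.V) (l : ℤ) (x : Lam Q asc l) (u : ↥(Pmod k Q x.i)),
      Tv j (emb l x u) = if x.b = j then emb l x u else 0 := hF.fv
  have Fa_assoc : ∀ (α : Q.E) (_hα : IsAssoc Q asc α) (j : Q.V) (pt : QP Q (Q.t α) j)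
      (ok : AssocPair Q asc (QP.preCons α pt) (QP.nil (Q.s α))) (l : ℤ)
      (dg : (((QP.nil (Q.s α)).length : ℤ)) - (((QP.preCons α pt).length : ℤ)) = l)
      (ok1 : AssocPair Q asc pt (QP.nil (Q.t α)))
      (dg1 : (((QP.nil (Q.t α)).length : ℤ)) - ((pt.length : ℤ)) = l + 1)
      (okb : ∀ b : {b : Q.E // Q.t b = Q.t α ∧ b ≠ α},
        AssocPair Q asc (QP.preCons b.1 (QP.castSrc b.2.1.symm pt))
          (QP.cons (QP.nil (Q.s b.1)) b.1 rfl))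
      (dgb : ∀ b : {b : Q.E // Q.t b = Q.t α ∧ b ≠ α},
        (((QP.cons (QP.nil (Q.s b.1)) b.1 rfl).length : ℤ)) -
          (((QP.preCons b.1 (QP.castSrc b.2.1.symm pt)).length : ℤ)) = l + 1)
      (u : ↥(Pmod k Q j)),
      Ta α (emb l ⟨Q.s α, j, Q.s α, QP.preCons α pt, QP.nil (Q.s α), ok, dg⟩ u) =
        emb (l + 1) ⟨Q.t α, j, Q.t α, pt, QP.nil (Q.t α), ok1, dg1⟩ u -
        ∑ b : {b : Q.E // Q.t b = Q.t α ∧ b ≠ α},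
          emb (l + 1) ⟨Q.s b.1, j, Q.t b.1, QP.preCons b.1 (QP.castSrc b.2.1.symm pt),
            QP.cons (QP.nil (Q.s b.1)) b.1 rfl, okb b, dgb b⟩ u := hF.fa_assoc
  have Fa_ext : ∀ (α : Q.E) (l : ℤ) (x : Lam Q asc l) (u : ↥(Pmod k Q x.i))
      (_hcond : ¬(x.q.length = 0 ∧ x.p.firstArrow = some α ∧ IsAssoc Q asc α))
      (h : Q.s α = x.b) (ok' : AssocPair Q asc x.p (QP.cons x.q α h))
      (dg' : (((QP.cons x.q α h).length : ℤ)) - ((x.p.length : ℤ)) = l + 1),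
      Ta α (emb l x u) = emb (l + 1) ⟨x.a, x.i, Q.t α, x.p, QP.cons x.q α h, ok', dg'⟩ u :=
    hF.fa_ext
  have Fa_zero : ∀ (α : Q.E) (l : ℤ) (x : Lam Q asc l) (u : ↥(Pmod k Q x.i))
      (_hcond : ¬(x.q.length = 0 ∧ x.p.firstArrow = some α ∧ IsAssoc Q asc α))
      (_h : Q.s α ≠ x.b), Ta α (emb l x u) = 0 := hF.fa_zero
  have Fs_top_eq : ∀ (α₁ : Q.E) (l : ℤ) (a i c : Q.V) (p : QP Q a i) (qh : QP Q a c)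
      (he : Q.s α₁ = c)
      (ok : AssocPair Q asc p (QP.cons qh α₁ he))
      (dg : (((QP.cons qh α₁ he).length : ℤ)) - ((p.length : ℤ)) = l)
      (ok' : AssocPair Q asc p qh)
      (dg' : ((qh.length : ℤ)) - ((p.length : ℤ)) = l - 1)
      (u : ↥(Pmod k Q i)),
      Ts α₁ (emb l ⟨a, i, Q.t α₁, p, QP.cons qh α₁ he, ok, dg⟩ u) =
        emb (l - 1) ⟨a, i, c, p, qh, ok', dg'⟩ u := hF.fs_top_eq
  have Fs_top_ne : ∀ (α α₁ : Q.E), α ≠ α₁ → ∀ (l : ℤ) (a i c : Q.V) (p : QP Q a i)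
      (qh : QP Q a c) (he : Q.s α₁ = c)
      (ok : AssocPair Q asc p (QP.cons qh α₁ he))
      (dg : (((QP.cons qh α₁ he).length : ℤ)) - ((p.length : ℤ)) = l)
      (u : ↥(Pmod k Q i)),
      Ts α (emb l ⟨a, i, Q.t α₁, p, QP.cons qh α₁ he, ok, dg⟩ u) = 0 := hF.fs_top_ne
  have Fs_nil_eq : ∀ (α : Q.E) (l : ℤ) (i : Q.V) (p : QP Q (Q.t α) i)
      (ok : AssocPair Q asc p (QP.nil (Q.t α)))
      (dg : (((QP.nil (Q.t α)).length : ℤ)) - ((p.length : ℤ)) = l)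
      (ok' : AssocPair Q asc (QP.preCons α p) (QP.nil (Q.s α)))
      (dg' : (((QP.nil (Q.s α)).length : ℤ)) - (((QP.preCons α p).length : ℤ)) = l - 1)
      (u : ↥(Pmod k Q i)),
      Ts α (emb l ⟨Q.t α, i, Q.t α, p, QP.nil (Q.t α), ok, dg⟩ u) =
        emb (l - 1) ⟨Q.s α, i, Q.s α, QP.preCons α p, QP.nil (Q.s α), ok', dg'⟩ u :=
    hF.fs_nil_eq
  have Fs_nil_ne : ∀ (α : Q.E) (l : ℤ) (x : Lam Q asc l) (u : ↥(Pmod k Q x.i)),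
      x.q.length = 0 → Q.t α ≠ x.a → Ts α (emb l x u) = 0 := hF.fs_nil_ne
  clear hF
  refine ⟨?_, ?_, ?_, ?_, ?_, ?_, ?_⟩
  -- (1) `e_i e_j = δ_{ij} e_i`
  · intro i j
    refine PT.induction_on _ (by simp) (fun a b ha hb => by
      simp only [map_add, ha, hb]; split <;> simp) ?_
    intro l x u
    by_cases h2 : i = j
    · subst h2
      rw [Fv i l x u]
      split <;> rename_i hh
      · rw [Fv i l x u, if_pos hh, if_pos rfl]
      · rw [map_zero, if_pos rfl]
    · rw [if_neg h2, Fv i l x u]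
      split <;> rename_i hh
      · rw [Fv j l x u, if_neg (fun hbj => h2 (hh.symm.trans hbj))]
      · rw [map_zero]
  -- (2) `α ⋅ e_{s(α)} = α`
  · intro e
    refine PT.induction_on _ (by simp) (fun a b ha hb => by
      simp only [map_add, ha, hb]) ?_
    intro l x u
    rw [Fv (Q.s e) l x u]
    by_cases h : x.b = Q.s e
    · rw [if_pos h]
    · rw [if_neg h, map_zero]
      symm
      by_cases hc : x.q.length = 0 ∧ x.p.firstArrow = some e ∧ IsAssoc Q asc e
      · exfalso
        apply h
        have h1 := QP.eq_of_length_zero x.q hc.1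
        have h2 := QP.firstArrow_src x.p e hc.2.1
        rw [← h1, ← h2]
      · exact Fa_zero e l x u hc (fun hh => h hh.symm)
  -- (3) `e_{t(α)} ⋅ α = α`
  · intro e
    refine PT.induction_on _ (by simp) (fun a b ha hb => by
      simp only [map_add, ha, hb]) ?_
    intro l x u
    obtain ⟨a, i2, b, p, q, ok0, dg0⟩ := x
    by_cases hc : q.length = 0 ∧ p.firstArrow = some e ∧ IsAssoc Q asc e
    · obtain ⟨h0, hfe, hA⟩ := hc
      obtain ⟨pt, ok', dg', hx⟩ := lam_decomp (k := k) p q ok0 dg0 e h0 hfe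
      rw [hx u]
      have dg1 : (((QP.nil (Q.t e)).length : ℤ)) - ((pt.length : ℤ)) = l + 1 := by
        have hl := QP.length_preCons e pt
        simp only [QP.length] at dg' ⊢
        rw [hl] at dg'
        push_cast at dg' ⊢
        omega
      have okb : ∀ bb : {bb : Q.E // Q.t bb = Q.t e ∧ bb ≠ e},
          AssocPair Q asc (QP.preCons bb.1 (QP.castSrc bb.2.1.symm pt))
            (QP.cons (QP.nil (Q.s bb.1)) bb.1 rfl) := fun bb =>
        mk_assocPair (QP.firstArrow_preCons bb.1 _) (by simp [QP.firstArrow])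
          (not_isAssoc_of_ne hA bb.2.1 bb.2.2)
      have dgb : ∀ bb : {bb : Q.E // Q.t bb = Q.t e ∧ bb ≠ e},
          (((QP.cons (QP.nil (Q.s bb.1)) bb.1 rfl).length : ℤ)) -
            (((QP.preCons bb.1 (QP.castSrc bb.2.1.symm pt)).length : ℤ)) = l + 1 := by
        intro bb
        have h1 := QP.length_preCons bb.1 (QP.castSrc bb.2.1.symm pt)
        have h2 := QP.length_castSrc bb.2.1.symm pt
        have hl := QP.length_preCons e pt
        simp only [QP.length] at dg' ⊢
        rw [hl] at dg'
        rw [h1, h2]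
        push_cast at dg' ⊢
        omega
      rw [Fa_assoc e hA i2 pt ok' l dg' (assocPair_nil_right pt) dg1 okb dgb u]
      rw [map_sub, map_sum,
        Fv (Q.t e) (l + 1) ⟨Q.t e, i2, Q.t e, pt, QP.nil (Q.t e),
          assocPair_nil_right pt, dg1⟩ u, if_pos rfl]
      congr 1
      refine Finset.sum_congr rfl (fun bb _ => ?_)
      rw [Fv (Q.t e) (l + 1) ⟨Q.s bb.1, i2, Q.t bb.1,
        QP.preCons bb.1 (QP.castSrc bb.2.1.symm pt),
        QP.cons (QP.nil (Q.s bb.1)) bb.1 rfl, okb bb, dgb bb⟩ u, if_pos bb.2.1]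
    · by_cases hb : Q.s e = b
      · have okext : AssocPair Q asc p (QP.cons q e hb) :=
          assocPair_cons p q e hb ok0 hc
        have dgext : (((QP.cons q e hb).length : ℤ)) - ((p.length : ℤ)) = l + 1 := by
          simp only [QP.length]
          push_cast
          omega
        rw [Fa_ext e l ⟨a, i2, b, p, q, ok0, dg0⟩ u hc hb okext dgext]
        rw [Fv (Q.t e) (l + 1) ⟨a, i2, Q.t e, p, QP.cons q e hb, okext, dgext⟩ u,
          if_pos rfl]
      · rw [Fa_zero e l ⟨a, i2, b, p, q, ok0, dg0⟩ u hc hb, map_zero]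
  -- (4) `α* ⋅ e_{t(α)} = α*`
  · intro e
    refine PT.induction_on _ (by simp) (fun a b ha hb => by
      simp only [map_add, ha, hb]) ?_
    intro l x u
    obtain ⟨a, i2, b, p, q, ok0, dg0⟩ := x
    rw [Fv (Q.t e) l ⟨a, i2, b, p, q, ok0, dg0⟩ u]
    by_cases h : b = Q.t e
    · rw [if_pos h]
    · rw [if_neg h, map_zero]
      symm
      cases q with
      | nil =>
        exact Fs_nil_ne e l ⟨a, i2, a, p, QP.nil a, ok0, dg0⟩ u (by simp [QP.length])
          (fun hh => h hh.symm)
      | cons qh α₁ he =>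
        exact Fs_top_ne e α₁ (fun hee => h (by rw [hee])) l a i2 _ p qh he ok0 dg0 u
  -- (5) `e_{s(α)} ⋅ α* = α*`
  · intro e
    refine PT.induction_on _ (by simp) (fun a b ha hb => by
      simp only [map_add, ha, hb]) ?_
    intro l x u
    obtain ⟨a, i2, b, p, q, ok0, dg0⟩ := x
    cases q with
    | nil =>
      by_cases h : Q.t e = a
      · have dgc : (((QP.nil (Q.t e)).length : ℤ))
            - (((QP.castSrc h.symm p).length : ℤ)) = l := by
          rw [QP.length_castSrc]
          simpa [QP.length] using dg0
        rw [emb_nil_cast (k := k) h p ok0 dg0 (assocPair_nil_right _) dgc u]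
        have dgpre : (((QP.nil (Q.s e)).length : ℤ))
            - (((QP.preCons e (QP.castSrc h.symm p)).length : ℤ)) = l - 1 := by
          rw [QP.length_preCons]
          simp only [QP.length] at dgc ⊢
          push_cast at dgc ⊢
          omega
        rw [Fs_nil_eq e l i2 (QP.castSrc h.symm p) (assocPair_nil_right _) dgc
          (assocPair_nil_right _) dgpre u]
        rw [Fv (Q.s e) (l - 1) ⟨Q.s e, i2, Q.s e, QP.preCons e (QP.castSrc h.symm p),
          QP.nil (Q.s e), assocPair_nil_right _, dgpre⟩ u, if_pos rfl]
      · rw [Fs_nil_ne e l ⟨a, i2, a, p, QP.nil a, ok0, dg0⟩ u (by simp [QP.length]) h,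
          map_zero]
    | cons qh α₁ he =>
      by_cases h : e = α₁
      · subst h
        have dgq : ((qh.length : ℤ)) - ((p.length : ℤ)) = l - 1 := by
          simp only [QP.length] at dg0 ⊢
          push_cast at dg0 ⊢
          omega
        rw [Fs_top_eq e l a i2 _ p qh he ok0 dg0 (assocPair_of_cons ok0) dgq u]
        rw [Fv (Q.s e) (l - 1) ⟨a, i2, _, p, qh, assocPair_of_cons ok0, dgq⟩ u,
          if_pos he.symm]
      · rw [Fs_top_ne e α₁ h l a i2 _ p qh he ok0 dg0 u, map_zero]
  -- (6) Cuntz–Krieger relation `α^op ⋅ (β^op)* = δ_{αβ} e_{s(α)}`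
  · intro e f
    refine PT.induction_on _ (by simp only [map_zero]; split <;> rfl)
      (fun a b ha hb => by
        simp only [map_add, ha, hb]; split <;> simp) ?_
    intro l x u
    obtain ⟨a, i2, b, p, q, ok0, dg0⟩ := x
    by_cases hc : q.length = 0 ∧ p.firstArrow = some e ∧ IsAssoc Q asc e
    · obtain ⟨h0, hfe, hA⟩ := hc
      obtain ⟨pt, ok', dg', hx⟩ := lam_decomp (k := k) p q ok0 dg0 e h0 hfe
      rw [hx u]
      have dg1 : (((QP.nil (Q.t e)).length : ℤ)) - ((pt.length : ℤ)) = l + 1 := by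
        have hl := QP.length_preCons e pt
        simp only [QP.length] at dg' ⊢
        rw [hl] at dg'
        push_cast at dg' ⊢
        omega
      have okb : ∀ bb : {bb : Q.E // Q.t bb = Q.t e ∧ bb ≠ e},
          AssocPair Q asc (QP.preCons bb.1 (QP.castSrc bb.2.1.symm pt))
            (QP.cons (QP.nil (Q.s bb.1)) bb.1 rfl) := fun bb =>
        mk_assocPair (QP.firstArrow_preCons bb.1 _) (by simp [QP.firstArrow])
          (not_isAssoc_of_ne hA bb.2.1 bb.2.2)
      have dgb : ∀ bb : {bb : Q.E // Q.t bb = Q.t e ∧ bb ≠ e},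
          (((QP.cons (QP.nil (Q.s bb.1)) bb.1 rfl).length : ℤ)) -
            (((QP.preCons bb.1 (QP.castSrc bb.2.1.symm pt)).length : ℤ)) = l + 1 := by
        intro bb
        have h1 := QP.length_preCons bb.1 (QP.castSrc bb.2.1.symm pt)
        have h2 := QP.length_castSrc bb.2.1.symm pt
        have hl := QP.length_preCons e pt
        simp only [QP.length] at dg' ⊢
        rw [hl] at dg'
        rw [h1, h2]
        push_cast at dg' ⊢
        omega
      rw [Fa_assoc e hA i2 pt ok' l dg' (assocPair_nil_right pt) dg1 okb dgb u,
        map_sub, map_sum]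
      by_cases hef : e = f
      · subst hef
        rw [if_pos rfl]
        have dgpre : (((QP.nil (Q.s e)).length : ℤ))
            - (((QP.preCons e pt).length : ℤ)) = l + 1 - 1 := by
          simp only [QP.length] at dg' ⊢
          omega
        rw [Fs_nil_eq e (l + 1) i2 pt (assocPair_nil_right pt) dg1 ok' dgpre u]
        rw [Finset.sum_eq_zero (fun bb _ =>
          Fs_top_ne e bb.1 (fun hh => bb.2.2 hh.symm) (l + 1) (Q.s bb.1) i2 (Q.s bb.1)
            (QP.preCons bb.1 (QP.castSrc bb.2.1.symm pt)) (QP.nil (Q.s bb.1)) rfl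
            (okb bb) (dgb bb) u), sub_zero]
        rw [Fv (Q.s e) l ⟨Q.s e, i2, Q.s e, QP.preCons e pt, QP.nil (Q.s e), ok', dg'⟩ u,
          if_pos rfl]
        exact emb_eq_of (by ring) _ _ ok' dgpre dg' u
      · rw [if_neg hef]
        by_cases hfe2 : Q.t f = Q.t e
        · have dgc : (((QP.nil (Q.t f)).length : ℤ))
              - (((QP.castSrc hfe2.symm pt).length : ℤ)) = l + 1 := by
            rw [QP.length_castSrc]
            simpa [QP.length] using dg1
          rw [emb_nil_cast (k := k) hfe2 pt (assocPair_nil_right pt) dg1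
            (assocPair_nil_right _) dgc u]
          have dgpre : (((QP.nil (Q.s f)).length : ℤ))
              - (((QP.preCons f (QP.castSrc hfe2.symm pt)).length : ℤ)) = l + 1 - 1 := by
            rw [QP.length_preCons, QP.length_castSrc]
            simp only [QP.length] at dg1 ⊢
            push_cast at dg1 ⊢
            omega
          rw [Fs_nil_eq f (l + 1) i2 (QP.castSrc hfe2.symm pt) (assocPair_nil_right _)
            dgc (assocPair_nil_right _) dgpre u]
          have bb0 : {bb : Q.E // Q.t bb = Q.t e ∧ bb ≠ e} :=
            ⟨f, hfe2, fun hh => hef hh.symm⟩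
          rw [Finset.sum_eq_single_of_mem (⟨f, hfe2, fun hh => hef hh.symm⟩ :
              {bb : Q.E // Q.t bb = Q.t e ∧ bb ≠ e}) (Finset.mem_univ _)
            (fun bb _ hbb =>
              Fs_top_ne f bb.1 (fun hh => hbb (Subtype.ext hh.symm)) (l + 1) (Q.s bb.1)
                i2 (Q.s bb.1) (QP.preCons bb.1 (QP.castSrc bb.2.1.symm pt))
                (QP.nil (Q.s bb.1)) rfl (okb bb) (dgb bb) u)]
          have hTs : Ts f (emb (l + 1) ⟨Q.s f, i2, Q.t f,
              QP.preCons f (QP.castSrc hfe2.symm pt), QP.cons (QP.nil (Q.s f)) f rfl,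
              okb ⟨f, hfe2, fun hh => hef hh.symm⟩,
              dgb ⟨f, hfe2, fun hh => hef hh.symm⟩⟩ u) =
              emb (l + 1 - 1) ⟨Q.s f, i2, Q.s f, QP.preCons f (QP.castSrc hfe2.symm pt),
                QP.nil (Q.s f), assocPair_nil_right _, dgpre⟩ u :=
            Fs_top_eq f (l + 1) (Q.s f) i2 (Q.s f)
              (QP.preCons f (QP.castSrc hfe2.symm pt)) (QP.nil (Q.s f)) rfl
              (okb ⟨f, hfe2, fun hh => hef hh.symm⟩)
              (dgb ⟨f, hfe2, fun hh => hef hh.symm⟩) (assocPair_nil_right _) dgpre u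
          rw [hTs, sub_self]
        · rw [Fs_nil_ne f (l + 1) ⟨Q.t e, i2, Q.t e, pt, QP.nil (Q.t e),
            assocPair_nil_right pt, dg1⟩ u (by simp [QP.length]) hfe2]
          rw [Finset.sum_eq_zero (fun bb _ =>
            Fs_top_ne f bb.1 (fun hh => hfe2 (by rw [hh]; exact bb.2.1)) (l + 1)
              (Q.s bb.1) i2 (Q.s bb.1) (QP.preCons bb.1 (QP.castSrc bb.2.1.symm pt))
              (QP.nil (Q.s bb.1)) rfl (okb bb) (dgb bb) u)]
          simp
    · by_cases hb : Q.s e = b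
      · have okext : AssocPair Q asc p (QP.cons q e hb) :=
          assocPair_cons p q e hb ok0 hc
        have dgext : (((QP.cons q e hb).length : ℤ)) - ((p.length : ℤ)) = l + 1 := by
          simp only [QP.length]
          push_cast
          omega
        rw [Fa_ext e l ⟨a, i2, b, p, q, ok0, dg0⟩ u hc hb okext dgext]
        by_cases hef : e = f
        · subst hef
          rw [if_pos rfl]
          have dg0' : ((q.length : ℤ)) - ((p.length : ℤ)) = l + 1 - 1 := by omega
          rw [Fs_top_eq e (l + 1) a i2 b p q hb okext dgext ok0 dg0' u]
          rw [Fv (Q.s e) l ⟨a, i2, b, p, q, ok0, dg0⟩ u, if_pos hb.symm]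
          exact emb_eq_of (by ring) p q ok0 dg0' dg0 u
        · rw [if_neg hef,
            Fs_top_ne f e (fun hh => hef hh.symm) (l + 1) a i2 b p q hb okext dgext u]
      · rw [Fa_zero e l ⟨a, i2, b, p, q, ok0, dg0⟩ u hc hb, map_zero]
        symm
        split
        · rw [Fv (Q.s e) l ⟨a, i2, b, p, q, ok0, dg0⟩ u,
            if_neg (fun hh => hb hh.symm)]
        · rfl
  -- (7) the second Cuntz–Krieger relation
  · intro i hi
    refine PT.induction_on
      (fun v => ∑ e : {e : Q.E // Q.t e = i}, Ta e.1 (Ts e.1 v) = Tv i v)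
      (by simp only [map_zero, Finset.sum_const_zero])
      (fun a b ha hb => by
        simp only [map_add, Finset.sum_add_distrib, ha, hb]) ?_
    intro l x u
    obtain ⟨a, i2, b, p, q, ok0, dg0⟩ := x
    cases q with
    | cons qh α₁ he =>
      have key : ∀ ee : {e : Q.E // Q.t e = i},
          Ta ee.1 (Ts ee.1 (emb l ⟨a, i2, Q.t α₁, p, QP.cons qh α₁ he, ok0, dg0⟩ u)) =
          if ee.1 = α₁ then emb l ⟨a, i2, Q.t α₁, p, QP.cons qh α₁ he, ok0, dg0⟩ u
          else 0 := by
        rintro ⟨e1, he1⟩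
        by_cases hh : e1 = α₁
        · subst hh
          rw [if_pos rfl]
          have dgq : ((qh.length : ℤ)) - ((p.length : ℤ)) = l - 1 := by
            simp only [QP.length] at dg0 ⊢
            push_cast at dg0 ⊢
            omega
          rw [Fs_top_eq e1 l a i2 _ p qh he ok0 dg0 (assocPair_of_cons ok0) dgq u]
          have hnc : ¬(qh.length = 0 ∧ p.firstArrow = some e1 ∧ IsAssoc Q asc e1) := by
            rintro ⟨hq0, hpf, hAs⟩
            cases qh with
            | nil => exact ok0 e1 hpf (by simp [QP.firstArrow]) hAs
            | cons q' f' hf' => simp [QP.length] at hq0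
          have dgX : (((QP.cons qh e1 he).length : ℤ)) - ((p.length : ℤ))
              = (l - 1) + 1 := by
            simp only [QP.length]
            push_cast
            omega
          rw [Fa_ext e1 (l - 1) ⟨a, i2, _, p, qh, assocPair_of_cons ok0, dgq⟩ u hnc he
            ok0 dgX]
          exact emb_eq_of (by ring) p (QP.cons qh e1 he) ok0 dgX dg0 u
        · rw [if_neg hh, Fs_top_ne e1 α₁ hh l a i2 _ p qh he ok0 dg0 u, map_zero]
      rw [Finset.sum_congr rfl (fun ee _ => key ee)]
      rw [Fv i l ⟨a, i2, Q.t α₁, p, QP.cons qh α₁ he, ok0, dg0⟩ u]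
      by_cases hbi : Q.t α₁ = i
      · rw [if_pos hbi]
        have hcnd : ∀ ee : {e : Q.E // Q.t e = i},
            (ee.1 = α₁) = (ee = ⟨α₁, hbi⟩) := fun ee =>
          propext ⟨fun h => Subtype.ext h, fun h => by rw [h]⟩
        simp only [hcnd]
        rw [Finset.sum_ite_eq' Finset.univ (⟨α₁, hbi⟩ : {e : Q.E // Q.t e = i}),
          if_pos (Finset.mem_univ _)]
      · rw [if_neg hbi]
        exact Finset.sum_eq_zero (fun ee _ =>
          if_neg (fun hh : ee.1 = α₁ => hbi (hh ▸ ee.2)))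
    | nil =>
      by_cases hai : a = i
      · subst hai
        have key : ∀ ee : {e : Q.E // Q.t e = a},
            Ta ee.1 (Ts ee.1 (emb l ⟨a, i2, a, p, QP.nil a, ok0, dg0⟩ u)) =
            (if ee = (⟨asc a hi, hasc a hi⟩ : {e : Q.E // Q.t e = a}) then
              emb l ⟨a, i2, a, p, QP.nil a, ok0, dg0⟩ u
                - ∑ g : Q.E, corrTerm (asc := asc) l a i2 p dg0 u g
            else 0) + corrTerm (asc := asc) l a i2 p dg0 u ee.1 := by
          rintro ⟨g, hte⟩
          have dgc : (((QP.nil (Q.t g)).length : ℤ))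
              - (((QP.castSrc hte.symm p).length : ℤ)) = l := by
            rw [QP.length_castSrc]
            simpa [QP.length] using dg0
          have dgpre : (((QP.nil (Q.s g)).length : ℤ))
              - (((QP.preCons g (QP.castSrc hte.symm p)).length : ℤ)) = l - 1 := by
            rw [QP.length_preCons, QP.length_castSrc]
            simp only [QP.length] at dg0 ⊢
            push_cast at dg0 ⊢
            omega
          rw [emb_nil_cast (k := k) hte p ok0 dg0 (assocPair_nil_right _) dgc u,
            Fs_nil_eq g l i2 (QP.castSrc hte.symm p) (assocPair_nil_right _) dgc
              (assocPair_nil_right _) dgpre u]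
          by_cases hA : IsAssoc Q asc g
          · have hg0 : g = asc a hi := by
              have h1 := eq_asc_of_isAssoc (asc := asc) hA a hte
              exact h1.symm
            subst hg0
            rw [if_pos (Subtype.ext rfl)]
            have hAs : IsAssoc Q asc (asc a hi) := isAssoc_asc a hi (hasc a hi)
            have dg1' : (((QP.nil (Q.t (asc a hi))).length : ℤ))
                - (((QP.castSrc hte.symm p).length : ℤ)) = (l - 1) + 1 := by
              omega
            have okb' : ∀ bb : {bb : Q.E // Q.t bb = Q.t (asc a hi) ∧ bb ≠ asc a hi},
                AssocPair Q asc
                  (QP.preCons bb.1 (QP.castSrc bb.2.1.symm (QP.castSrc hte.symm p)))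
                  (QP.cons (QP.nil (Q.s bb.1)) bb.1 rfl) := fun bb =>
              mk_assocPair (QP.firstArrow_preCons bb.1 _) (by simp [QP.firstArrow])
                (not_isAssoc_of_ne hAs bb.2.1 bb.2.2)
            have dgb' : ∀ bb : {bb : Q.E // Q.t bb = Q.t (asc a hi) ∧ bb ≠ asc a hi},
                (((QP.cons (QP.nil (Q.s bb.1)) bb.1 rfl).length : ℤ))
                  - (((QP.preCons bb.1
                      (QP.castSrc bb.2.1.symm (QP.castSrc hte.symm p))).length : ℤ))
                  = (l - 1) + 1 := by
              intro bb
              rw [QP.length_preCons, QP.length_castSrc, QP.length_castSrc]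
              simp only [QP.length] at dg0 ⊢
              push_cast at dg0 ⊢
              omega
            rw [Fa_assoc (asc a hi) hAs i2 (QP.castSrc hte.symm p)
              (assocPair_nil_right _) (l - 1) dgpre (assocPair_nil_right _) dg1'
              okb' dgb' u]
            rw [corrTerm_zero (g := asc a hi) (fun hg => hg.2 hAs), add_zero]
            congr 1
            · exact emb_eq_of (by ring) _ _ (assocPair_nil_right _) dg1' dgc u
            · have hterm : ∀ bb : {bb : Q.E // Q.t bb = Q.t (asc a hi) ∧ bb ≠ asc a hi},
                  emb ((l - 1) + 1) ⟨Q.s bb.1, i2, Q.t bb.1,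
                    QP.preCons bb.1 (QP.castSrc bb.2.1.symm (QP.castSrc hte.symm p)),
                    QP.cons (QP.nil (Q.s bb.1)) bb.1 rfl, okb' bb, dgb' bb⟩ u
                  = corrTerm (asc := asc) l a i2 p dg0 u bb.1 := by
                intro bb
                have hcnd : Q.t bb.1 = a ∧ ¬ IsAssoc Q asc bb.1 :=
                  ⟨bb.2.1.trans hte, not_isAssoc_of_ne hAs bb.2.1 bb.2.2⟩
                have dgC : (((QP.cons (QP.nil (Q.s bb.1)) bb.1 rfl).length : ℤ))
                    - (((QP.preCons bb.1
                        (QP.castSrc bb.2.1.symm (QP.castSrc hte.symm p))).length : ℤ))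
                    = l := by
                  rw [QP.length_preCons, QP.length_castSrc, QP.length_castSrc]
                  simp only [QP.length] at dg0 ⊢
                  push_cast at dg0 ⊢
                  omega
                rw [corrTerm_pos hcnd
                  (mk_assocPair (QP.firstArrow_preCons bb.1 _) (by simp [QP.firstArrow])
                    hcnd.2)
                  (by
                    rw [QP.length_preCons, QP.length_castSrc]
                    simp only [QP.length] at dg0 ⊢
                    push_cast at dg0 ⊢
                    omega)]
                exact emb_corr_comp (by ring) hte.symm bb.1 bb.2.1.symm
                  hcnd.1.symm p (okb' bb) (dgb' bb)
                  (mk_assocPair (QP.firstArrow_preCons bb.1 _)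
                    (by simp [QP.firstArrow]) hcnd.2)
                  (by
                    rw [QP.length_preCons, QP.length_castSrc]
                    simp only [QP.length] at dg0 ⊢
                    push_cast at dg0 ⊢
                    omega) u
              rw [Finset.sum_congr rfl (fun bb _ => hterm bb)]
              rw [← Finset.sum_subtype
                (Finset.univ.filter
                  (fun g : Q.E => Q.t g = Q.t (asc a hi) ∧ g ≠ asc a hi))
                (by simp) (corrTerm (asc := asc) l a i2 p dg0 u), Finset.sum_filter]
              refine Finset.sum_congr rfl (fun g _ => ?_)
              by_cases hcnd : Q.t g = Q.t (asc a hi) ∧ g ≠ asc a hi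
              · rw [if_pos hcnd]
              · rw [if_neg hcnd]
                symm
                apply corrTerm_zero
                rintro ⟨h1, h2⟩
                apply hcnd
                refine ⟨by rw [h1, hasc a hi], ?_⟩
                intro hg0
                exact h2 (hg0 ▸ hAs)
          · have hne : (⟨g, hte⟩ : {e : Q.E // Q.t e = a})
                ≠ ⟨asc a hi, hasc a hi⟩ := by
              intro hh
              apply hA
              have hv : g = asc a hi := congrArg Subtype.val hh
              rw [hv]
              exact isAssoc_asc a hi (hasc a hi)
            rw [if_neg hne, zero_add]
            have hnc : ¬((QP.nil (Q.s g)).length = 0 ∧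
                (QP.preCons g (QP.castSrc hte.symm p)).firstArrow = some g ∧
                IsAssoc Q asc g) := fun hx => hA hx.2.2
            have dgx : (((QP.cons (QP.nil (Q.s g)) g rfl).length : ℤ))
                - (((QP.preCons g (QP.castSrc hte.symm p)).length : ℤ))
                = (l - 1) + 1 := by
              rw [QP.length_preCons, QP.length_castSrc]
              simp only [QP.length] at dg0 ⊢
              push_cast at dg0 ⊢
              omega
            rw [Fa_ext g (l - 1) ⟨Q.s g, i2, Q.s g,
              QP.preCons g (QP.castSrc hte.symm p), QP.nil (Q.s g),
              assocPair_nil_right _, dgpre⟩ u hnc rfl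
              (mk_assocPair (QP.firstArrow_preCons g _) (by simp [QP.firstArrow]) hA)
              dgx]
            have dgC : (((QP.cons (QP.nil (Q.s g)) g rfl).length : ℤ))
                - (((QP.preCons g (QP.castSrc hte.symm p)).length : ℤ)) = l := by
              rw [QP.length_preCons, QP.length_castSrc]
              simp only [QP.length] at dg0 ⊢
              push_cast at dg0 ⊢
              omega
            rw [corrTerm_pos ⟨hte, hA⟩
              (mk_assocPair (QP.firstArrow_preCons g _) (by simp [QP.firstArrow]) hA)
              dgC]
            exact emb_eq_of (by ring) _ _
              (mk_assocPair (QP.firstArrow_preCons g _) (by simp [QP.firstArrow]) hA)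
              dgx dgC u
        rw [Finset.sum_congr rfl (fun ee _ => key ee), Finset.sum_add_distrib,
          Finset.sum_ite_eq' Finset.univ
            (⟨asc a hi, hasc a hi⟩ : {e : Q.E // Q.t e = a}),
          if_pos (Finset.mem_univ _)]
        have hsub : ∑ ee : {e : Q.E // Q.t e = a},
            corrTerm (asc := asc) l a i2 p dg0 u ee.1
            = ∑ g : Q.E, corrTerm (asc := asc) l a i2 p dg0 u g := by
          rw [← Finset.sum_subtype (Finset.univ.filter (fun g : Q.E => Q.t g = a))
            (by simp) (corrTerm (asc := asc) l a i2 p dg0 u), Finset.sum_filter]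
          refine Finset.sum_congr rfl (fun g _ => ?_)
          by_cases hcnd : Q.t g = a
          · rw [if_pos hcnd]
          · rw [if_neg hcnd]
            exact (corrTerm_zero (fun hh => hcnd hh.1)).symm
        rw [hsub, sub_add_cancel, Fv a l ⟨a, i2, a, p, QP.nil a, ok0, dg0⟩ u,
          if_pos rfl]
      · rw [Fv i l ⟨a, i2, a, p, QP.nil a, ok0, dg0⟩ u, if_neg hai]
        exact Finset.sum_eq_zero (fun ee _ => by
          rw [Fs_nil_ne ee.1 l ⟨a, i2, a, p, QP.nil a, ok0, dg0⟩ u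
            (by simp [QP.length]) (fun hh => hai (hh.symm.trans ee.2)), map_zero])
end
end

section
/- Let Q be a finite quiver without sources and (p, q) an associated pair in Q. In the right B = L_k(Q^op)-module P•, one has (Σ_{i ∈ Q₀} e_i ζ_{(e_i, e_i)}) · (p^op)* q^op = e_{t(p)} ζ_{(p, q)}, and for each arrow β ∈ Q₁, β ζ_{(e_{s(β)}, e_{s(β)})} · (p^op)* q^op = δ_{s(β), t(p)} β ζ_{(p, q)}. -/
noncomputable section

/-- Generators of the Leavitt path algebra: trivial paths, arrows and ghost arrows. -/
inductive LGen (Q : FQ)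
  | vtx (i : Q.V)
  | ar (e : Q.E)
  | star (e : Q.E)

/-- The defining relations of the Leavitt path algebra `L_k(Q)`:
(0) `e_i e_j = δ_{ij} e_i`; (1) `e_{t(α)} α = α e_{s(α)} = α`;
(2) `e_{s(α)} α* = α* e_{t(α)} = α*`; (3) `α β* = δ_{αβ} e_{t(α)}` (first
Cuntz–Krieger relation); (4) `∑_{s(α)=i} α* α = e_i` for every non-sink vertex `i`
(second Cuntz–Krieger relation). -/
inductive LRel (k : Type) [Field k] (Q : FQ) :
    FreeAlgebra k (LGen Q) → FreeAlgebra k (LGen Q) → Prop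
  | vtx_mul (i j : Q.V) :
      LRel k Q (FreeAlgebra.ι k (LGen.vtx i) * FreeAlgebra.ι k (LGen.vtx j))
        (if i = j then FreeAlgebra.ι k (LGen.vtx i) else 0)
  | vtx_ar (e : Q.E) :
      LRel k Q (FreeAlgebra.ι k (LGen.vtx (Q.t e)) * FreeAlgebra.ι k (LGen.ar e))
        (FreeAlgebra.ι k (LGen.ar e))
  | ar_vtx (e : Q.E) :
      LRel k Q (FreeAlgebra.ι k (LGen.ar e) * FreeAlgebra.ι k (LGen.vtx (Q.s e)))
        (FreeAlgebra.ι k (LGen.ar e))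
  | vtx_star (e : Q.E) :
      LRel k Q (FreeAlgebra.ι k (LGen.vtx (Q.s e)) * FreeAlgebra.ι k (LGen.star e))
        (FreeAlgebra.ι k (LGen.star e))
  | star_vtx (e : Q.E) :
      LRel k Q (FreeAlgebra.ι k (LGen.star e) * FreeAlgebra.ι k (LGen.vtx (Q.t e)))
        (FreeAlgebra.ι k (LGen.star e))
  | ck1 (e f : Q.E) :
      LRel k Q (FreeAlgebra.ι k (LGen.ar e) * FreeAlgebra.ι k (LGen.star f))
        (if e = f then FreeAlgebra.ι k (LGen.vtx (Q.t e)) else 0)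
  | ck2 (i : Q.V) (h : ∃ e, Q.s e = i) :
      LRel k Q (∑ e : {e : Q.E // Q.s e = i},
          FreeAlgebra.ι k (LGen.star e.1) * FreeAlgebra.ι k (LGen.ar e.1))
        (FreeAlgebra.ι k (LGen.vtx i))

/-- The Leavitt path algebra `L_k(Q)` of the finite quiver `Q` over the field `k`. -/
abbrev Leavitt (k : Type) [Field k] (Q : FQ) := RingQuot (LRel k Q)

/-- The idempotent `e_i ∈ L_k(Q)`. -/
def vtxL (k : Type) [Field k] (Q : FQ) (i : Q.V) : Leavitt k Q :=
  RingQuot.mkAlgHom k (LRel k Q) (FreeAlgebra.ι k (LGen.vtx i))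

/-- The arrow `α ∈ L_k(Q)`. -/
def arL (k : Type) [Field k] (Q : FQ) (e : Q.E) : Leavitt k Q :=
  RingQuot.mkAlgHom k (LRel k Q) (FreeAlgebra.ι k (LGen.ar e))

/-- The ghost arrow `α* ∈ L_k(Q)`. -/
def ghostL (k : Type) [Field k] (Q : FQ) (e : Q.E) : Leavitt k Q :=
  RingQuot.mkAlgHom k (LRel k Q) (FreeAlgebra.ι k (LGen.star e))

/-- The element `p ∈ L_k(Q)` associated to a path `p` in `Q` (`e_i` for a trivial
path). -/
def pathL (k : Type) [Field k] (Q : FQ) : ∀ {i j : Q.V}, QP Q i j → Leavitt k Q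
  | _, _, .nil i => vtxL k Q i
  | _, _, .cons p e _ => arL k Q e * pathL k Q p

/-- The element `p* ∈ L_k(Q)` associated to a path `p` in `Q`
(`p* = α₁* α₂* ⋯ α_m*` for `p = α_m ⋯ α₂ α₁`, and `e_i* = e_i`). -/
def starPathL (k : Type) [Field k] (Q : FQ) : ∀ {i j : Q.V}, QP Q i j → Leavitt k Q
  | _, _, .nil i => vtxL k Q i
  | _, _, .cons p e _ => starPathL k Q p * ghostL k Q e
/-- The element `p^op` of `L_k(Q^op)` associated to a path `p` in `Q`. -/
def pathOp (k : Type) [Field k] (Q : FQ) : ∀ {i j : Q.V}, QP Q i j → Leavitt k Q.op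
  | _, _, .nil i => vtxL k Q.op i
  | _, _, .cons p e _ => pathOp k Q p * arL k Q.op e

/-- The element `(p^op)*` of `L_k(Q^op)` associated to a path `p` in `Q`. -/
def starOp (k : Type) [Field k] (Q : FQ) : ∀ {i j : Q.V}, QP Q i j → Leavitt k Q.op
  | _, _, .nil i => vtxL k Q.op i
  | _, _, .cons p e _ => ghostL k Q.op e * starOp k Q p
namespace QP

variable {Q : FQ}

lemma castSrc_cons {i i' j : Q.V} (h : i = i') (p : QP Q i j) (e : Q.E) (he : Q.s e = j) :
    castSrc h (cons p e he) = cons (castSrc h p) e he := by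
  subst h; rfl

/-- `comp p r` is the path `r p`: first `p`, then `r`. -/
def comp : ∀ {a i : Q.V}, QP Q a i → ∀ {j : Q.V}, QP Q i j → QP Q a j
  | _, _, .nil _, _, r => r
  | _, _, .cons p _ he, _, r => comp p (castSrc he (preCons _ r))

lemma comp_cons {a i : Q.V} (p : QP Q a i) {j : Q.V} (r : QP Q i j) (e : Q.E)
    (he : Q.s e = j) : comp p (cons r e he) = cons (comp p r) e he := by
  induction p with
  | nil => rw [comp, comp]
  | cons p f hf ih =>
    rw [comp, comp, preCons, castSrc_cons, ih]

lemma comp_nil_left {a j : Q.V} (r : QP Q a j) : comp (nil a) r = r := by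
  rw [comp]

lemma comp_nil {a i : Q.V} (p : QP Q a i) : comp p (nil i) = p := by
  induction p with
  | nil => rw [comp]
  | cons p e he ih =>
    subst he
    rw [comp, preCons, castSrc, comp_cons, ih]

lemma firstArrow_eq_none_of_length_eq_zero {i j : Q.V} {p : QP Q i j} (h : p.length = 0) :
    p.firstArrow = none := by
  cases p with
  | nil => rw [firstArrow]
  | cons p e he => simp [length] at h

end QP

lemma AssocPair.of_cons {Q : FQ} {asc : ∀ i : Q.V, (∃ e, Q.t e = i) → Q.E}
    {a i c : Q.V} {p : QP Q a i} {q : QP Q a c} {e : Q.E} {he : Q.s e = c}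
    (ok : AssocPair Q asc p (QP.cons q e he)) : AssocPair Q asc p q :=
  fun x hp hq => ok x hp (by simp [QP.firstArrow, hq])

lemma RingHom.unop_map_mul_apply {R S M : Type*} [Semiring R] [Semiring S]
    [AddCommMonoid M] [Module S M] (ρ : R →+* (Module.End S M)ᵐᵒᵖ) (x y : R) (v : M) :
    (ρ (x * y)).unop v = (ρ y).unop ((ρ x).unop v) := by
  rw [map_mul, MulOpposite.unop_mul, Module.End.mul_apply]

section RightAction

variable {k : Type} [Field k] {Q : FQ} {asc : ∀ i : Q.V, (∃ e, Q.t e = i) → Q.E}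
  {ρ : Leavitt k Q.op →+* (Module.End (AlgA k Q) (PT k Q asc))ᵐᵒᵖ}
  (hF : ActionFormulas k Q asc
    (fun j u => (ρ (vtxL k Q.op j)).unop u)
    (fun e u => (ρ (arL k Q.op e)).unop u)
    (fun e u => (ρ (ghostL k Q.op e)).unop u))
include hF

/-- `ζ_{(r, e_i)} · (p^op)* = ζ_{(r p, e_a)}`: each ghost arrow of `p` is absorbed into
the first component by formula (4.4) for `l(q) = 0`. -/
lemma act_starOp_emb_nil {a i : Q.V} (p : QP Q a i) {j : Q.V} (r : QP Q i j) {P : QP Q a j}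
    (hP : p.comp r = P) (l₀ l₁ : ℤ) (dgr : ((QP.nil i).length : ℤ) - (r.length : ℤ) = l₀)
    (dg : ((QP.nil a).length : ℤ) - (P.length : ℤ) = l₁) (u : ↥(Pmod k Q j)) :
    (ρ (starOp k Q p)).unop
        (emb l₀ ⟨i, j, i, r, QP.nil i, assocPair_nil_right r, dgr⟩ u) =
      emb l₁ ⟨a, j, a, P, QP.nil a, assocPair_nil_right P, dg⟩ u := by
  induction p generalizing l₀ with
  | nil =>
    rw [QP.comp_nil_left] at hP
    subst hP
    obtain rfl : l₀ = l₁ := dgr.symm.trans dg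
    simpa [starOp] using hF.fv a l₀ ⟨a, j, a, r, QP.nil a, assocPair_nil_right r, dgr⟩ u
  | cons p e he ih =>
    subst he
    have dg₁ : ((QP.nil (Q.s e)).length : ℤ) - ((QP.preCons e r).length : ℤ) = l₀ - 1 := by
      simp only [QP.length, QP.length_preCons] at dgr ⊢
      omega
    rw [starOp, RingHom.unop_map_mul_apply,
      hF.fs_nil_eq e l₀ j r _ dgr (assocPair_nil_right _) dg₁ u]
    exact ih (QP.preCons e r) (by rwa [QP.comp] at hP) (l₀ - 1) dg₁

/-- The first factor of `(p^op)*` to act is `(α^op)*` for the last arrow `α` of `p` (or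
`e_{t(p)}` if `p` is trivial), and it kills `ζ_{(e_v, e_v)}` for `v ≠ t(α)`. -/
lemma act_starOp_nilLam_of_ne {a i : Q.V} (p : QP Q a i) {v : Q.V} (hv : v ≠ i)
    (u : ↥(Pmod k Q v)) : (ρ (starOp k Q p)).unop (emb 0 (nilLam v) u) = 0 := by
  cases p with
  | nil => simpa [starOp, nilLam, hv] using hF.fv a 0 (nilLam v) u
  | cons p e he =>
    rw [starOp, RingHom.unop_map_mul_apply,
      hF.fs_nil_ne e 0 (nilLam v) u (by rw [nilLam, QP.length]) (fun h => hv h.symm), map_zero]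

/-- `ζ_{(p, e_a)} · q^op = ζ_{(p, q)}`: since `(p, q)` is associated, formula (4.3)
prolongs the second component by one arrow of `q` at a time. -/
lemma act_pathOp_emb_nil {a b : Q.V} (q : QP Q a b) {i : Q.V} (p : QP Q a i)
    (ok : AssocPair Q asc p q) (l₀ l₁ : ℤ)
    (dgn : ((QP.nil a).length : ℤ) - (p.length : ℤ) = l₀)
    (dg : (q.length : ℤ) - (p.length : ℤ) = l₁) (u : ↥(Pmod k Q i)) :
    (ρ (pathOp k Q q)).unop (emb l₀ ⟨a, i, a, p, QP.nil a, assocPair_nil_right p, dgn⟩ u) =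
      emb l₁ ⟨a, i, b, p, q, ok, dg⟩ u := by
  induction q generalizing l₁ with
  | nil =>
    obtain rfl : l₀ = l₁ := dgn.symm.trans dg
    simpa [pathOp] using hF.fv a l₀ ⟨a, i, a, p, QP.nil a, assocPair_nil_right p, dgn⟩ u
  | cons q e he ih =>
    have dg' : (q.length : ℤ) - (p.length : ℤ) = l₀ + q.length := by
      simp only [QP.length] at dgn
      omega
    obtain rfl : l₁ = l₀ + q.length + 1 := by
      simp only [QP.length] at dg
      omega
    have not_assoc : ¬(q.length = 0 ∧ p.firstArrow = some e ∧ IsAssoc Q asc e) :=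
      fun ⟨hq, hp, he'⟩ => ok e hp
        (by simp [QP.firstArrow, QP.firstArrow_eq_none_of_length_eq_zero hq]) he'
    rw [pathOp, RingHom.unop_map_mul_apply, ih ok.of_cons _ dg']
    exact hF.fa_ext e _ ⟨a, i, _, p, q, ok.of_cons, dg'⟩ u not_assoc he ok dg

lemma act_starOp_mul_pathOp_nilLam {a i b : Q.V} (p : QP Q a i) (q : QP Q a b)
    (ok : AssocPair Q asc p q) (l : ℤ) (dg : (q.length : ℤ) - (p.length : ℤ) = l)
    (u : ↥(Pmod k Q i)) :
    (ρ (starOp k Q p * pathOp k Q q)).unop (emb 0 (nilLam i) u) =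
      emb l ⟨a, i, b, p, q, ok, dg⟩ u := by
  have dgn : ((QP.nil a).length : ℤ) - (p.length : ℤ) = -p.length := by simp [QP.length]
  have dgr : ((QP.nil i).length : ℤ) - ((QP.nil i).length : ℤ) = 0 := sub_self _
  rw [RingHom.unop_map_mul_apply, show (ρ (starOp k Q p)).unop (emb 0 (nilLam i) u) = _ from
      act_starOp_emb_nil hF p (QP.nil i) (QP.comp_nil p) 0 (-p.length) dgr dgn u]
  exact act_pathOp_emb_nil hF q p ok _ l dgn dg u

end RightAction

theorem action_on_canonical_generators_general (k : Type) [Field k]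
    (Q : FQ)
    (asc : ∀ i : Q.V, (∃ e, Q.t e = i) → Q.E)
    (ρ : Leavitt k Q.op →+* (Module.End (AlgA k Q) (PT k Q asc))ᵐᵒᵖ)
    (hF : ActionFormulas k Q asc
      (fun j u => (ρ (vtxL k Q.op j)).unop u)
      (fun e u => (ρ (arL k Q.op e)).unop u)
      (fun e u => (ρ (ghostL k Q.op e)).unop u))
    {a i b : Q.V} (p : QP Q a i) (q : QP Q a b)
    (ok : AssocPair Q asc p q) (l : ℤ)
    (dg : (q.length : ℤ) - (p.length : ℤ) = l) :
    ((ρ (starOp k Q p * pathOp k Q q)).unop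
        (∑ v : Q.V, emb 0 (nilLam v) ⟨vtxA k Q v, vtxA_mem k Q v⟩) =
      emb l ⟨a, i, b, p, q, ok, dg⟩ ⟨vtxA k Q i, vtxA_mem k Q i⟩) ∧
    ∀ β : Q.E,
      (ρ (starOp k Q p * pathOp k Q q)).unop
          (emb 0 (nilLam (Q.s β)) ⟨arA k Q β, arA_mem k Q β rfl⟩) =
        if h : Q.s β = i then
          emb l ⟨a, i, b, p, q, ok, dg⟩ ⟨arA k Q β, arA_mem k Q β h⟩
        else 0 := by
  have vanish : ∀ v ≠ i, ∀ u : ↥(Pmod k Q v),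
      (ρ (starOp k Q p * pathOp k Q q)).unop (emb 0 (nilLam v) u) = 0 := fun v hv u => by
    rw [RingHom.unop_map_mul_apply, act_starOp_nilLam_of_ne hF p hv, map_zero]
  refine ⟨?_, fun β => ?_⟩
  · rw [map_sum]
    refine (Finset.sum_eq_single_of_mem i (Finset.mem_univ i)
      fun v _ hv => vanish v hv _).trans ?_
    exact act_starOp_mul_pathOp_nilLam hF p q ok l dg _
  · split_ifs with h
    · subst h
      exact act_starOp_mul_pathOp_nilLam hF p q ok l dg _
    · exact vanish _ h _

/-- **The action of `(p^op)* q^op` on the canonical generators (Lemma 4.5).**  Let `Q`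
be a finite quiver without sources and let the Leavitt path algebra `B = L_k(Q^op)` act
on the right of the projective Leavitt complex `P•` through `ρ`, the action of the
generators being given by the defining formulas.  Then for every associated pair
`(p, q)` in `Q`:
(1) `(∑_{i ∈ Q₀} e_i ζ_{(e_i,e_i)}) · (p^op)* q^op = e_{t(p)} ζ_{(p,q)}`; and
(2) `β ζ_{(e_{s(β)}, e_{s(β)})} · (p^op)* q^op = δ_{s(β), t(p)} β ζ_{(p,q)}` for every
arrow `β ∈ Q₁`. -/
theorem action_on_canonical_generators (k : Type) [Field k]
    (Q : FQ) (hQ : Q.NoSources)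
    (asc : ∀ i : Q.V, (∃ e, Q.t e = i) → Q.E)
    (hasc : ∀ (i : Q.V) (h : ∃ e, Q.t e = i), Q.t (asc i h) = i)
    (ρ : Leavitt k Q.op →+* (Module.End (AlgA k Q) (PT k Q asc))ᵐᵒᵖ)
    (hF : ActionFormulas k Q asc
      (fun j u => (ρ (vtxL k Q.op j)).unop u)
      (fun e u => (ρ (arL k Q.op e)).unop u)
      (fun e u => (ρ (ghostL k Q.op e)).unop u))
    {a i b : Q.V} (p : QP Q a i) (q : QP Q a b)
    (ok : AssocPair Q asc p q) (l : ℤ)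
    (dg : (q.length : ℤ) - (p.length : ℤ) = l) :
    ((ρ (starOp k Q p * pathOp k Q q)).unop
        (∑ v : Q.V, emb 0 (nilLam v) ⟨vtxA k Q v, vtxA_mem k Q v⟩) =
      emb l ⟨a, i, b, p, q, ok, dg⟩ ⟨vtxA k Q i, vtxA_mem k Q i⟩) ∧
    ∀ β : Q.E,
      (ρ (starOp k Q p * pathOp k Q q)).unop
          (emb 0 (nilLam (Q.s β)) ⟨arA k Q β, arA_mem k Q β rfl⟩) =
        if h : Q.s β = i then
          emb l ⟨a, i, b, p, q, ok, dg⟩ ⟨arA k Q β, arA_mem k Q β h⟩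
        else 0 :=
  action_on_canonical_generators_general k Q asc ρ hF p q ok l dg
end
end
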